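/- arXiv:1703.10592 — 4 statements merged into one kernel-verified Lean document; each statement's English description precedes it below -/
import Mathlib

section
/- Let q be a power of an odd prime. A projectivity g ∈ PGL(3, 𝔽_{q²}) maps the Hermitian curve 𝓗_q onto itself and fixes both the point P₀ = (0:0:1) and the line ℓ : Z = 0 if and only if g is induced by a (necessarily unique) matrix of the form [[a,b,0],[c,d,0],[0,0,1]] with entries in 𝔽_{q²} satisfying ac^q − a^q c = 0, bd^q − b^q d = 0, bc^q − a^q d = −1 and ad^q − b^q c = 1. In particular, the set 𝓜 of all such matrices is a subgroup of GL(3, 𝔽_{q²}). -/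
/-!
Fixing `P₀` and `ℓ` forces `g = e • diag(N, 1)` for a `2 × 2` block `N = [[a, b], [c, d]]`.
Since `x ↦ x^q` is additive, the Hermitian polynomial at `g (x, y, z)` is `e^(q+1)` times
`(a c^q - a^q c) x^(q+1) + (b d^q - b^q d) y^(q+1) + (a d^q - b^q c) x y^q`
`+ (b c^q - a^q d) x^q y + ω z^(q+1)`, so the four conditions make `g` preserve the curve; conversely, evaluating at the points
`(1:0:0)`, `(0:1:0)`, `(1:1:0)` and `(1:y:1)` with `y^q - y = -ω` of the curve recovers them.

The four conditions are the entries of `Nᵀ J N^(q) = J` with `J = [[0, 1], [-1, 0]]` and `N^(q)`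
the entrywise Frobenius twist. Such `N` form a monoid, and taking determinants gives
`det N * (det N)^q = 1`, so they are invertible and closed under inverses.
-/

/-- The Hermitian polynomial `X Y^q - Y X^q + ω Z^(q+1)` evaluated at a vector. -/
def hermEval (q : ℕ) {K : Type} [Field K] (ω : K) (v : Fin 3 → K) : K :=
  v 0 * v 1 ^ q - v 1 * v 0 ^ q + ω * v 2 ^ (q + 1)

/-- The action of a matrix with entries in `F` on vectors over an extension `K`. -/
def applyMat {F K : Type} [Field F] [Field K] [Algebra F K]
    (g : Matrix (Fin 3) (Fin 3) F) (v : Fin 3 → K) : Fin 3 → K :=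
  (g.map (algebraMap F K)).mulVec v

namespace Matrix

variable {R : Type*} [CommRing R]

def twistedIsometries (σ : R →+* R) : Submonoid (Matrix (Fin 2) (Fin 2) R) where
  carrier := {N | Nᵀ * !![0, 1; -1, 0] * N.map σ = !![0, 1; -1, 0]}
  one_mem' := by simp
  mul_mem' {N N'} (hN : _ = _) (hN' : _ = _) := by
    change _ = _
    calc (N * N')ᵀ * !![0, 1; -1, 0] * (N * N').map σ
        = N'ᵀ * (Nᵀ * !![0, 1; -1, 0] * N.map σ) * N'.map σ := by
          simp only [transpose_mul, Matrix.map_mul, Matrix.mul_assoc]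
      _ = _ := by rw [hN, hN']

theorem mem_twistedIsometries_iff (σ : R →+* R) (a b c d : R) :
    !![a, b; c, d] ∈ twistedIsometries σ ↔
      a * σ c - σ a * c = 0 ∧ b * σ d - σ b * d = 0 ∧
        b * σ c - σ a * d = -1 ∧ a * σ d - σ b * c = 1 := by
  change _ = _ ↔ _
  simp only [← Matrix.ext_iff, Fin.forall_fin_two, mul_apply, Fin.sum_univ_two, transpose_apply,
    map_apply, of_apply, cons_val', cons_val_zero, cons_val_one, cons_val_fin_one, mul_zero,
    mul_neg, mul_one, zero_add, add_zero, neg_mul, neg_add_eq_sub, mul_comm c, mul_comm d]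
  tauto

theorem det_mul_apply_det_eq_one_of_mem {σ : R →+* R} {N : Matrix (Fin 2) (Fin 2) R}
    (hN : N ∈ twistedIsometries σ) : N.det * σ N.det = 1 := by
  have := congrArg det (show Nᵀ * !![0, 1; -1, 0] * N.map σ = !![0, 1; -1, 0] from hN)
  simpa [det_fin_two_of, RingHom.map_det] using this

theorem nonsing_inv_mem_twistedIsometries {σ : R →+* R} {N : Matrix (Fin 2) (Fin 2) R}
    (hN : N ∈ twistedIsometries σ) : N⁻¹ ∈ twistedIsometries σ := by
  have hdet : IsUnit N.det := .of_mul_eq_one _ (det_mul_apply_det_eq_one_of_mem hN)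
  change _ = _
  conv_lhs => rw [← (show Nᵀ * !![0, 1; -1, 0] * N.map σ = !![0, 1; -1, 0] from hN)]
  rw [← Matrix.mul_assoc, ← Matrix.mul_assoc, ← transpose_mul, mul_nonsing_inv _ hdet,
    Matrix.mul_assoc, ← Matrix.map_mul, mul_nonsing_inv _ hdet]
  simp

def blockDiagOne : Matrix (Fin 2) (Fin 2) R →* Matrix (Fin 3) (Fin 3) R where
  toFun N := !![N 0 0, N 0 1, 0; N 1 0, N 1 1, 0; 0, 0, 1]
  map_one' := by ext i j; fin_cases i <;> fin_cases j <;> rfl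
  map_mul' N N' := by
    ext i j
    fin_cases i <;> fin_cases j <;> simp [mul_apply, Fin.sum_univ_succ]

theorem det_blockDiagOne (N : Matrix (Fin 2) (Fin 2) R) : (blockDiagOne N).det = N.det := by
  simp [blockDiagOne, det_fin_three, det_fin_two]

theorem isUnit_det_of_mem_map_blockDiagOne {σ : R →+* R} {M : Matrix (Fin 3) (Fin 3) R}
    (hM : M ∈ (twistedIsometries σ).map blockDiagOne) : IsUnit M.det := by
  obtain ⟨N, hN, rfl⟩ := hM
  rw [det_blockDiagOne]
  exact .of_mul_eq_one _ (det_mul_apply_det_eq_one_of_mem hN)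

theorem exists_inv_mem_map_blockDiagOne {σ : R →+* R} {M : Matrix (Fin 3) (Fin 3) R}
    (hM : M ∈ (twistedIsometries σ).map blockDiagOne) :
    ∃ M' ∈ (twistedIsometries σ).map blockDiagOne, M * M' = 1 ∧ M' * M = 1 := by
  obtain ⟨N, hN, rfl⟩ := hM
  have hdet : IsUnit N.det := .of_mul_eq_one _ (det_mul_apply_det_eq_one_of_mem hN)
  refine ⟨blockDiagOne N⁻¹, ⟨N⁻¹, nonsing_inv_mem_twistedIsometries hN, rfl⟩, ?_, ?_⟩ <;>
    rw [← map_mul, ← map_one blockDiagOne]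
  · rw [mul_nonsing_inv _ hdet]
  · rw [nonsing_inv_mul _ hdet]

end Matrix

open Matrix

section HermitianForm

variable {R : Type*} [CommRing R]

def IsHermIsometry (q : ℕ) (a b c d : R) : Prop :=
  a * c ^ q - a ^ q * c = 0 ∧ b * d ^ q - b ^ q * d = 0 ∧
    b * c ^ q - a ^ q * d = -1 ∧ a * d ^ q - b ^ q * c = 1

theorem isHermIsometry_map_iff {S : Type*} [CommRing S] {f : R →+* S}
    (hf : Function.Injective f) {q : ℕ} {a b c d : R} :
    IsHermIsometry q (f a) (f b) (f c) (f d) ↔ IsHermIsometry q a b c d := by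
  simp only [IsHermIsometry, ← map_pow, ← map_mul, ← map_sub, ← map_neg f, ← map_zero f,
    ← map_one f, hf.eq_iff]

theorem isHermIsometry_iff_mem_twistedIsometries (p n : ℕ) [ExpChar R p] (a b c d : R) :
    IsHermIsometry (p ^ n) a b c d ↔ !![a, b; c, d] ∈ twistedIsometries (iterateFrobenius R p n) := by
  rw [mem_twistedIsometries_iff]
  rfl

variable {K : Type} [Field K]

theorem hermEval_smul (q : ℕ) (ω t : K) (v : Fin 3 → K) :
    hermEval q ω (t • v) = t ^ (q + 1) * hermEval q ω v := by
  simp only [hermEval, Pi.smul_apply, smul_eq_mul]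
  ring

theorem hermEval_linear (p n : ℕ) [ExpChar K p] (ω a b c d x y z : K) :
    hermEval (p ^ n) ω ![a * x + b * y, c * x + d * y, z] =
      (a * c ^ p ^ n - a ^ p ^ n * c) * x ^ (p ^ n + 1) +
        (b * d ^ p ^ n - b ^ p ^ n * d) * y ^ (p ^ n + 1) +
        (a * d ^ p ^ n - b ^ p ^ n * c) * (x * y ^ p ^ n) +
        (b * c ^ p ^ n - a ^ p ^ n * d) * (x ^ p ^ n * y) + ω * z ^ (p ^ n + 1) := by
  simp only [hermEval, cons_val_zero, cons_val_one, cons_val_two, head_cons, tail_cons,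
    add_pow_expChar_pow, mul_pow]
  ring

theorem IsHermIsometry.hermEval_linear {p n : ℕ} [ExpChar K p] {a b c d : K}
    (h : IsHermIsometry (p ^ n) a b c d) (ω x y z : K) :
    hermEval (p ^ n) ω ![a * x + b * y, c * x + d * y, z] = hermEval (p ^ n) ω ![x, y, z] := by
  obtain ⟨h₁, h₂, h₃, h₄⟩ := h
  rw [_root_.hermEval_linear, h₁, h₂, h₃, h₄]
  simp only [hermEval, cons_val_zero, cons_val_one, cons_val_two, head_cons, tail_cons]
  ring

theorem exists_pow_sub_self_eq [IsAlgClosed K] {q : ℕ} (hq : 1 < q) (s : K) :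
    ∃ y : K, y ^ q - y = s := by
  open Polynomial in
  have hdeg : 0 < (X ^ q - X - C s : K[X]).degree := by
    rw [← natDegree_pos_iff_degree_pos, natDegree_sub_C,
      FiniteField.X_pow_card_sub_X_natDegree_eq K hq]
    omega
  obtain ⟨y, hy⟩ := IsAlgClosed.exists_root _ hdeg.ne'
  exact ⟨y, sub_eq_iff_eq_add'.mpr (by simpa [sub_sub, sub_eq_zero] using hy)⟩

theorem isHermIsometry_of_hermEval_eq_zero_imp [IsAlgClosed K] {p n : ℕ} [ExpChar K p]
    (hq : 1 < p ^ n) {ω : K} (hω : ω ≠ 0) {a b c d : K}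
    (h : ∀ x y z : K, ![x, y, z] ≠ 0 → hermEval (p ^ n) ω ![x, y, z] = 0 →
      hermEval (p ^ n) ω ![a * x + b * y, c * x + d * y, z] = 0) :
    IsHermIsometry (p ^ n) a b c d := by
  simp only [hermEval_linear] at h
  set q := p ^ n
  have hq0 : q ≠ 0 := by omega
  have hev (x y z : K) :
      hermEval q ω ![x, y, z] = x * y ^ q - y * x ^ q + ω * z ^ (q + 1) := rfl
  have h₁ := h 1 0 0 (by simp) (by simp [hev, hq0])
  have h₂ := h 0 1 0 (by simp) (by simp [hev, hq0])
  have h₃ := h 1 1 0 (by simp) (by simp [hev, hq0])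
  obtain ⟨y, hy⟩ := exists_pow_sub_self_eq hq (-ω)
  have h₄ := h 1 y 1 (by simp) (by rw [hev]; linear_combination hy)
  simp only [one_pow, zero_pow hq0, zero_pow (Nat.succ_ne_zero q), mul_one, mul_zero, one_mul,
    add_zero, zero_add] at h₁ h₂ h₃ h₄
  rw [h₁, h₂] at h₃ h₄
  have hγ : a * d ^ q - b ^ q * c - 1 = 0 := by
    refine (mul_eq_zero.mp ?_).resolve_left hω
    linear_combination (a * d ^ q - b ^ q * c) * hy - h₄ + y * h₃
  exact ⟨h₁, h₂, by linear_combination h₃ - hγ, by linear_combination hγ⟩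

end HermitianForm

section Blocks

variable {R : Type*} [CommRing R]

def hermIsometryBlocks (q : ℕ) : Set (Matrix (Fin 3) (Fin 3) R) :=
  {M | ∃ a b c d : R, M = !![a, b, 0; c, d, 0; 0, 0, 1] ∧ IsHermIsometry q a b c d}

theorem hermIsometryBlocks_eq_map (p n : ℕ) [ExpChar R p] :
    (hermIsometryBlocks (p ^ n) : Set (Matrix (Fin 3) (Fin 3) R)) =
      (twistedIsometries (iterateFrobenius R p n)).map blockDiagOne := by
  ext M
  simp only [SetLike.mem_coe, Submonoid.mem_map]
  constructor
  · rintro ⟨a, b, c, d, rfl, h⟩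
    exact ⟨!![a, b; c, d], (isHermIsometry_iff_mem_twistedIsometries p n a b c d).mp h, rfl⟩
  · rintro ⟨N, hN, rfl⟩
    rw [eta_fin_two N, ← isHermIsometry_iff_mem_twistedIsometries] at hN
    exact ⟨N 0 0, N 0 1, N 1 0, N 1 1, rfl, hN⟩

end Blocks

section Action

variable {F K : Type} [Field F] [Field K] [Algebra F K]

theorem applyMat_smul (c : F) (g : Matrix (Fin 3) (Fin 3) F) (v : Fin 3 → K) :
    applyMat (c • g) v = algebraMap F K c • applyMat g v := by
  rw [applyMat, applyMat, map_smul' _ _ _ (map_mul _), smul_mulVec]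

theorem applyMat_block (a b c d : F) (v : Fin 3 → K) :
    applyMat !![a, b, 0; c, d, 0; 0, 0, 1] v =
      ![algebraMap F K a * v 0 + algebraMap F K b * v 1,
        algebraMap F K c * v 0 + algebraMap F K d * v 1, v 2] := by
  ext i
  fin_cases i <;> simp [applyMat, mulVec, dotProduct, Fin.sum_univ_three]

theorem hermEval_applyMat_of_mem {p n : ℕ} [ExpChar K p] {M : Matrix (Fin 3) (Fin 3) F}
    (hM : M ∈ hermIsometryBlocks (p ^ n)) (ω : K) (v : Fin 3 → K) :
    hermEval (p ^ n) ω (applyMat M v) = hermEval (p ^ n) ω v := by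
  obtain ⟨a, b, c, d, rfl, h⟩ := hM
  rw [applyMat_block, ((isHermIsometry_map_iff (algebraMap F K).injective).mpr h).hermEval_linear]
  rfl

theorem eq_of_smul_eq_smul_of_mem {q : ℕ} {M M' : Matrix (Fin 3) (Fin 3) F} {c c' : F}
    (hM : M ∈ hermIsometryBlocks q) (hM' : M' ∈ hermIsometryBlocks q) (hc : c ≠ 0)
    (h : c • M = c' • M') : M = M' := by
  obtain ⟨a, b, d, e, rfl, -⟩ := hM
  obtain ⟨a', b', d', e', rfl, -⟩ := hM'
  obtain rfl : c = c' := by simpa using congrFun (congrFun h 2) 2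
  exact smul_right_injective _ hc h

def StabilizesHermPointLine (q : ℕ) (ω : F) (K : Type) [Field K] [Algebra F K]
    (g : Matrix (Fin 3) (Fin 3) F) : Prop :=
  (∀ v : Fin 3 → K, v ≠ 0 →
      (hermEval q (algebraMap F K ω) v = 0 ↔ hermEval q (algebraMap F K ω) (applyMat g v) = 0)) ∧
    (∃ c : F, c ≠ 0 ∧ g.mulVec ![0, 0, 1] = c • ![0, 0, 1]) ∧
    (∀ v : Fin 3 → K, v ≠ 0 → v 2 = 0 → applyMat g v 2 = 0)

theorem stabilizesHermPointLine_smul_of_mem {p n : ℕ} [ExpChar K p] {ω : F}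
    {M : Matrix (Fin 3) (Fin 3) F} (hM : M ∈ hermIsometryBlocks (p ^ n)) {c : F} (hc : c ≠ 0) :
    StabilizesHermPointLine (p ^ n) ω K (c • M) := by
  obtain ⟨a, b, d, e, rfl, -⟩ := id hM
  refine ⟨fun v _ => ?_, ⟨c, hc, ?_⟩, fun v _ hv => ?_⟩
  · rw [applyMat_smul, hermEval_smul, hermEval_applyMat_of_mem hM]
    simp [hc]
  · ext i
    fin_cases i <;> simp [mulVec, dotProduct, Fin.sum_univ_three]
  · rw [applyMat_smul, applyMat_block]
    simp [hv]

theorem exists_smul_mem_of_stabilizesHermPointLine [IsAlgClosed K] {p n : ℕ} [ExpChar K p]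
    (hq : 1 < p ^ n) {ω : F} (hω : ω ≠ 0) {g : Matrix (Fin 3) (Fin 3) F}
    (hg : StabilizesHermPointLine (p ^ n) ω K g) :
    ∃ M, M ∈ hermIsometryBlocks (p ^ n) ∧ ∃ c : F, c ≠ 0 ∧ g = c • M := by
  obtain ⟨hcurve, ⟨e, he, hP⟩, hline⟩ := hg
  have hrow (j : Fin 3) (hj : j ≠ 2) : g 2 j = 0 := by
    simpa [applyMat, mulVec] using hline (Pi.single j 1) (by simp) (by simp [hj.symm])
  have hcol (i : Fin 3) : g i 2 = e * ![0, 0, 1] i := by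
    simpa [mulVec, dotProduct, Fin.sum_univ_three] using congrFun hP i
  set M : Matrix (Fin 3) (Fin 3) F :=
    !![e⁻¹ * g 0 0, e⁻¹ * g 0 1, 0; e⁻¹ * g 1 0, e⁻¹ * g 1 1, 0; 0, 0, 1]
  have hg : g = e • M := by
    ext i j
    fin_cases i <;> fin_cases j <;> simp [M, hrow 0 (by decide), hrow 1 (by decide), hcol, he]
  refine ⟨M, ⟨_, _, _, _, rfl, ?_⟩, e, he, hg⟩
  rw [← isHermIsometry_map_iff (algebraMap F K).injective]
  refine isHermIsometry_of_hermEval_eq_zero_imp hq ((map_ne_zero (algebraMap F K)).mpr hω)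
    fun x y z hv h0 => ?_
  have := (hcurve _ hv).mp h0
  rw [hg, applyMat_smul, hermEval_smul, applyMat_block] at this
  simpa [he] using this

theorem stabilizesHermPointLine_iff [IsAlgClosed K] {p n : ℕ} [ExpChar K p] (hq : 1 < p ^ n)
    {ω : F} (hω : ω ≠ 0) (g : Matrix (Fin 3) (Fin 3) F) :
    StabilizesHermPointLine (p ^ n) ω K g ↔
      ∃! M, M ∈ hermIsometryBlocks (p ^ n) ∧ ∃ c : F, c ≠ 0 ∧ g = c • M := by
  constructor
  · intro hg
    obtain ⟨M, hM, c, hc, rfl⟩ := exists_smul_mem_of_stabilizesHermPointLine hq hω hg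
    refine ⟨M, ⟨hM, c, hc, rfl⟩, ?_⟩
    rintro M' ⟨hM', c', -, h⟩
    exact (eq_of_smul_eq_smul_of_mem hM hM' hc h).symm
  · rintro ⟨M, ⟨hM, c, hc, rfl⟩, -⟩
    exact stabilizesHermPointLine_smul_of_mem hM hc

end Action

theorem stmt_0_general (p : ℕ) (hp : p.Prime) (h : ℕ) (hh : 1 ≤ h)
    (q : ℕ) (hq : q = p ^ h)
    (F : Type) [Field F] [Fintype F] (hF : Fintype.card F = q ^ 2)
    (K : Type) [Field K] [IsAlgClosed K] [Algebra F K]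
    (ω : F) (hω : ω ^ (q - 1) = -1)
    (Mset : Set (Matrix (Fin 3) (Fin 3) F))
    (hMset : ∀ M, M ∈ Mset ↔ ∃ a b c d : F,
      M = !![a, b, 0; c, d, 0; 0, 0, 1] ∧
      a * c ^ q - a ^ q * c = 0 ∧ b * d ^ q - b ^ q * d = 0 ∧
      b * c ^ q - a ^ q * d = -1 ∧ a * d ^ q - b ^ q * c = 1) :
    -- a projectivity (an invertible matrix, taken up to scalars) preserves the curve
    -- and fixes the point `P₀` and the line `ℓ` iff it is induced by a unique matrix in `𝓜`
    (∀ g : Matrix (Fin 3) (Fin 3) F, IsUnit g.det →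
      (((∀ v : Fin 3 → K, v ≠ 0 →
            (hermEval q (algebraMap F K ω) v = 0 ↔ hermEval q (algebraMap F K ω) (applyMat g v) = 0)) ∧
          (∃ c : F, c ≠ 0 ∧ g.mulVec ![0, 0, 1] = c • ![0, 0, 1]) ∧
          (∀ v : Fin 3 → K, v ≠ 0 → v 2 = 0 → applyMat g v 2 = 0)) ↔
        (∃! M, M ∈ Mset ∧ ∃ c : F, c ≠ 0 ∧ g = c • M))) ∧
    -- `𝓜` is a subgroup of `GL(3, 𝔽_{q²})`
    ((1 : Matrix (Fin 3) (Fin 3) F) ∈ Mset ∧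
      (∀ M N, M ∈ Mset → N ∈ Mset → M * N ∈ Mset) ∧
      (∀ M ∈ Mset, IsUnit M.det) ∧
      (∀ M ∈ Mset, ∃ N ∈ Mset, M * N = 1 ∧ N * M = 1)) := by
  subst hq
  obtain rfl : Mset = hermIsometryBlocks (p ^ h) := Set.ext hMset
  have : Fact p.Prime := ⟨hp⟩
  have : CharP F p := charP_of_card_eq_prime_pow (hF.trans (pow_mul p h 2).symm)
  have : CharP K p := charP_of_injective_algebraMap (algebraMap F K).injective p
  have hq : 1 < p ^ h := Nat.one_lt_pow (by omega) hp.one_lt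
  have hω0 : ω ≠ 0 := by
    rintro rfl
    simp [zero_pow (Nat.sub_ne_zero_of_lt hq)] at hω
  refine ⟨fun g _ => stabilizesHermPointLine_iff hq hω0 g, ?_⟩
  rw [hermIsometryBlocks_eq_map p h]
  exact ⟨one_mem _, fun _ _ => mul_mem, fun _ => isUnit_det_of_mem_map_blockDiagOne,
    fun _ => exists_inv_mem_map_blockDiagOne⟩

/-- Let `q` be a power of an odd prime.  A projectivity
`g ∈ PGL(3,𝔽_{q²})` maps the Hermitian curve `𝓗_q : X Y^q - Y X^q + ω Z^(q+1) = 0`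
onto itself and fixes both `P₀ = (0:0:1)` and the line `ℓ : Z = 0` if and only if it is
induced by a (necessarily unique) matrix `[[a,b,0],[c,d,0],[0,0,1]]` with
`a c^q - a^q c = 0`, `b d^q - b^q d = 0`, `b c^q - a^q d = -1`, `a d^q - b^q c = 1`.
In particular the set `𝓜` of all such matrices is a subgroup of `GL(3,𝔽_{q²})`. -/
theorem stmt_0 (p : ℕ) (hp : p.Prime) (hodd : p ≠ 2) (h : ℕ) (hh : 1 ≤ h)
    (q : ℕ) (hq : q = p ^ h)
    (F : Type) [Field F] [Fintype F] (hF : Fintype.card F = q ^ 2)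
    (K : Type) [Field K] [IsAlgClosed K] [Algebra F K]
    (ω : F) (hω : ω ^ (q - 1) = -1)
    (Mset : Set (Matrix (Fin 3) (Fin 3) F))
    (hMset : ∀ M, M ∈ Mset ↔ ∃ a b c d : F,
      M = !![a, b, 0; c, d, 0; 0, 0, 1] ∧
      a * c ^ q - a ^ q * c = 0 ∧ b * d ^ q - b ^ q * d = 0 ∧
      b * c ^ q - a ^ q * d = -1 ∧ a * d ^ q - b ^ q * c = 1) :
    -- a projectivity (an invertible matrix, taken up to scalars) preserves the curve
    -- and fixes the point `P₀` and the line `ℓ` iff it is induced by a unique matrix in `𝓜`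
    (∀ g : Matrix (Fin 3) (Fin 3) F, IsUnit g.det →
      (((∀ v : Fin 3 → K, v ≠ 0 →
            (hermEval q (algebraMap F K ω) v = 0 ↔ hermEval q (algebraMap F K ω) (applyMat g v) = 0)) ∧
          (∃ c : F, c ≠ 0 ∧ g.mulVec ![0, 0, 1] = c • ![0, 0, 1]) ∧
          (∀ v : Fin 3 → K, v ≠ 0 → v 2 = 0 → applyMat g v 2 = 0)) ↔
        (∃! M, M ∈ Mset ∧ ∃ c : F, c ≠ 0 ∧ g = c • M))) ∧
    -- `𝓜` is a subgroup of `GL(3, 𝔽_{q²})`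
    ((1 : Matrix (Fin 3) (Fin 3) F) ∈ Mset ∧
      (∀ M N, M ∈ Mset → N ∈ Mset → M * N ∈ Mset) ∧
      (∀ M ∈ Mset, IsUnit M.det) ∧
      (∀ M ∈ Mset, ∃ N ∈ Mset, M * N = 1 ∧ N * M = 1)) :=
  stmt_0_general p hp h hh q hq F hF K ω hω Mset hMset
end

section
/- Let q be a power of an odd prime. The center of the group 𝓜 equals { diag(a,a,1) : a ∈ 𝔽_{q²}, a^{q+1} = 1 }, which is a cyclic group of order q+1. -/
/-!
A central element `!![a, b, 0; c, d, 0; 0, 0, 1]` of `𝓜` commutes with the rotation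
`!![0, 1, 0; -1, 0, 0; 0, 0, 1]` and the transvection `!![1, 1, 0; 0, 1, 0; 0, 0, 1]`, both of
which lie in `𝓜` because `q` is odd; this forces `b = c = 0` and `d = a`, and the defining
relations of `𝓜` then reduce to `a ^ (q + 1) = 1`. Conversely such block scalars commute with
every block matrix. Hence `a ↦ diag(a, a, 1)` identifies the `(q + 1)`-st roots of unity of
`𝔽_{q²}` with the centre: a finite subgroup of a field's units, so cyclic, and of order `q + 1`
because `q + 1` divides `q² - 1 = #𝔽_{q²}ˣ`.
-/

open Matrix

section BlockMatrix

variable {R : Type*} [CommRing R]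

theorem scalarBlock_commute (s a b c d : R) :
    Commute !![s, 0, 0; 0, s, 0; 0, 0, 1] !![a, b, 0; c, d, 0; 0, 0, 1] := by
  simp only [Commute, SemiconjBy, mul_fin_three]
  ext i j
  fin_cases i <;> fin_cases j <;> simp [mul_comm]

theorem eq_scalarBlock_of_commute {a b c d : R}
    (hw : Commute !![a, b, 0; c, d, 0; 0, 0, 1] !![0, 1, 0; -1, 0, 0; 0, 0, 1])
    (hu : Commute !![a, b, 0; c, d, 0; 0, 0, 1] !![1, 1, 0; 0, 1, 0; 0, 0, 1]) :
    b = 0 ∧ c = 0 ∧ d = a := by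
  simp only [Commute, SemiconjBy, mul_fin_three] at hw hu
  have hw₀₀ := congrFun (congrFun hw 0) 0
  have hw₀₁ := congrFun (congrFun hw 0) 1
  have hu₀₀ := congrFun (congrFun hu 0) 0
  simp only [mul_zero, mul_neg, mul_one, zero_add, add_zero, neg_zero, of_apply, cons_val',
    cons_val_zero, cons_val_fin_one, zero_mul, one_mul, neg_mul, cons_val_one, left_eq_add]
    at hw₀₀ hw₀₁ hu₀₀
  exact ⟨by linear_combination -hw₀₀ - hu₀₀, hu₀₀, hw₀₁.symm⟩

def scalarBlockHom (R : Type*) [CommRing R] : Rˣ →* GL (Fin 3) R where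
  toFun u := ⟨!![(u : R), 0, 0; 0, u, 0; 0, 0, 1], !![(u⁻¹ : Rˣ), 0, 0; 0, (u⁻¹ : Rˣ), 0; 0, 0, 1],
    by simp [one_fin_three], by simp [one_fin_three]⟩
  map_one' := by ext i j; fin_cases i <;> fin_cases j <;> simp
  map_mul' u v := by ext : 1; simp

@[simp]
theorem coe_scalarBlockHom (u : Rˣ) :
    (scalarBlockHom R u : Matrix (Fin 3) (Fin 3) R) = !![(u : R), 0, 0; 0, u, 0; 0, 0, 1] := rfl

theorem scalarBlockHom_injective : Function.Injective (scalarBlockHom R) := fun u v huv => by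
  ext
  simpa using congrArg (fun g : GL (Fin 3) R => (g : Matrix (Fin 3) (Fin 3) R) 0 0) huv

end BlockMatrix

theorem natCard_rootsOfUnity_of_dvd {F : Type*} [Field F] [Finite F] {n : ℕ} [NeZero n]
    (hn : n ∣ Nat.card Fˣ) : Nat.card (rootsOfUnity n F) = n := by
  obtain ⟨g, hg⟩ := IsCyclic.exists_ofOrder_eq_natCard (α := Fˣ)
  obtain ⟨m, hm⟩ := hn
  have hm₀ : m ≠ 0 := by rintro rfl; exact Nat.card_pos.ne' (by simpa using hm)
  refine IsPrimitiveRoot.card_rootsOfUnity' (ζ := g ^ m) ?_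
  rw [IsPrimitiveRoot.iff_orderOf, orderOf_pow_of_dvd hm₀ (hg ▸ hm ▸ dvd_mul_left m n), hg, hm,
    Nat.mul_div_cancel _ (Nat.pos_of_ne_zero hm₀)]

section GroupM

variable {F : Type*} [Field F] {q : ℕ}

def IsMMatrix (q : ℕ) (A : Matrix (Fin 3) (Fin 3) F) : Prop :=
  ∃ a b c d : F, A = !![a, b, 0; c, d, 0; 0, 0, 1] ∧
    a * c ^ q - a ^ q * c = 0 ∧ b * d ^ q - b ^ q * d = 0 ∧
    b * c ^ q - a ^ q * d = -1 ∧ a * d ^ q - b ^ q * c = 1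

theorem isMMatrix_scalarBlock (hq : q ≠ 0) {a : F} (ha : a ^ (q + 1) = 1) :
    IsMMatrix q !![a, 0, 0; 0, a, 0; 0, 0, 1] :=
  ⟨a, 0, 0, a, rfl, by simp [hq], by simp [hq], by simp [hq, ← pow_succ, ha],
    by simp [hq, ← pow_succ', ha]⟩

theorem isMMatrix_rotation (hq : Odd q) :
    IsMMatrix q !![(0 : F), 1, 0; -1, 0, 0; 0, 0, 1] :=
  ⟨0, 1, -1, 0, rfl, by simp [hq.pos.ne'], by simp [hq.pos.ne'], by simp [hq.neg_one_pow],
    by simp [hq.pos.ne']⟩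

theorem isMMatrix_transvection (hq : q ≠ 0) :
    IsMMatrix q !![(1 : F), 1, 0; 0, 1, 0; 0, 0, 1] :=
  ⟨1, 1, 0, 1, rfl, by simp [hq], by simp, by simp [hq], by simp⟩

theorem exists_mem_of_isMMatrix {M : Subgroup (GL (Fin 3) F)}
    (hM : ∀ g : GL (Fin 3) F, g ∈ M ↔ IsMMatrix q (g : Matrix (Fin 3) (Fin 3) F))
    {A : Matrix (Fin 3) (Fin 3) F} (hA : IsMMatrix q A) (hdet : A.det ≠ 0) :
    ∃ g ∈ M, (g : Matrix (Fin 3) (Fin 3) F) = A :=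
  ⟨.mkOfDetNeZero A hdet, (hM _).2 hA, rfl⟩

theorem mem_center_iff_eq_scalarBlock (hq : Odd q) {M : Subgroup (GL (Fin 3) F)}
    (hM : ∀ g : GL (Fin 3) F, g ∈ M ↔ IsMMatrix q (g : Matrix (Fin 3) (Fin 3) F)) (g : M) :
    g ∈ Subgroup.center M ↔ ∃ a : F, a ^ (q + 1) = 1 ∧
      ((g : GL (Fin 3) F) : Matrix (Fin 3) (Fin 3) F) = !![a, 0, 0; 0, a, 0; 0, 0, 1] := by
  constructor
  · intro hg
    obtain ⟨a, b, c, d, hgm, -, -, h, -⟩ := (hM g).1 g.2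
    obtain ⟨w, hwM, hw⟩ :=
      exists_mem_of_isMMatrix hM (isMMatrix_rotation hq) (by simp [det_fin_three])
    obtain ⟨u, huM, hu⟩ :=
      exists_mem_of_isMMatrix hM (isMMatrix_transvection hq.pos.ne') (by simp [det_fin_three])
    have commute_of_mem {x : GL (Fin 3) F} (hx : x ∈ M) :
        Commute ((g : GL (Fin 3) F) : Matrix (Fin 3) (Fin 3) F) x := by
      have := Subgroup.mem_center_iff.1 hg ⟨x, hx⟩
      exact (congrArg (fun y : M => ((y : GL (Fin 3) F) : Matrix (Fin 3) (Fin 3) F)) this).symm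
    have hgw := commute_of_mem hwM
    have hgu := commute_of_mem huM
    rw [hgm, hw] at hgw
    rw [hgm, hu] at hgu
    obtain ⟨rfl, rfl, rfl⟩ := eq_scalarBlock_of_commute hgw hgu
    refine ⟨_, ?_, hgm⟩
    rw [pow_succ]
    linear_combination -h
  · rintro ⟨a, -, hg⟩
    refine Subgroup.mem_center_iff.2 fun x => Subtype.ext (Units.ext ?_)
    obtain ⟨a', b', c', d', hx, -⟩ := (hM x).1 x.2
    simpa [hg, hx] using (scalarBlock_commute a a' b' c' d').eq.symm

theorem scalarBlockHom_mem (hq : q ≠ 0) {M : Subgroup (GL (Fin 3) F)}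
    (hM : ∀ g : GL (Fin 3) F, g ∈ M ↔ IsMMatrix q (g : Matrix (Fin 3) (Fin 3) F))
    (ζ : rootsOfUnity (q + 1) F) : scalarBlockHom F ζ ∈ M :=
  (hM _).2 (isMMatrix_scalarBlock hq ((mem_rootsOfUnity' _ _).1 ζ.2))

theorem scalarBlockHom_mem_center (hq : Odd q) {M : Subgroup (GL (Fin 3) F)}
    (hM : ∀ g : GL (Fin 3) F, g ∈ M ↔ IsMMatrix q (g : Matrix (Fin 3) (Fin 3) F))
    (ζ : rootsOfUnity (q + 1) F) :
    (⟨_, scalarBlockHom_mem hq.pos.ne' hM ζ⟩ : M) ∈ Subgroup.center M :=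
  (mem_center_iff_eq_scalarBlock hq hM _).2 ⟨_, (mem_rootsOfUnity' _ _).1 ζ.2, rfl⟩

noncomputable def rootsOfUnityEquivCenter (hq : Odd q) {M : Subgroup (GL (Fin 3) F)}
    (hM : ∀ g : GL (Fin 3) F, g ∈ M ↔ IsMMatrix q (g : Matrix (Fin 3) (Fin 3) F)) :
    rootsOfUnity (q + 1) F ≃* Subgroup.center M :=
  .ofBijective ((((scalarBlockHom F).comp (rootsOfUnity (q + 1) F).subtype).codRestrict M
      (scalarBlockHom_mem hq.pos.ne' hM)).codRestrict _ (scalarBlockHom_mem_center hq hM))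
    ⟨fun ζ η h => Subtype.ext (scalarBlockHom_injective congr(($h : GL (Fin 3) F))), by
      rintro ⟨g, hg⟩
      obtain ⟨a, ha, hga⟩ := (mem_center_iff_eq_scalarBlock hq hM g).1 hg
      exact ⟨rootsOfUnity.mkOfPowEq a ha, Subtype.ext (Subtype.ext (Units.ext hga.symm))⟩⟩

end GroupM

theorem natCard_rootsOfUnity_succ_of_card_eq_sq {F : Type*} [Field F] [Fintype F] {q : ℕ}
    (hF : Fintype.card F = q ^ 2) : Nat.card (rootsOfUnity (q + 1) F) = q + 1 := by
  refine natCard_rootsOfUnity_of_dvd ⟨q - 1, ?_⟩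
  rw [Nat.card_units, Nat.card_eq_fintype_card, hF, ← Nat.sq_sub_sq, one_pow]

theorem stmt_2_general (p : ℕ) (hp : p.Prime) (hodd : p ≠ 2) (h : ℕ)
    (q : ℕ) (hq : q = p ^ h)
    (F : Type) [Field F] [Fintype F] (hF : Fintype.card F = q ^ 2)
    (M : Subgroup (Matrix.GeneralLinearGroup (Fin 3) F))
    (hM : ∀ g : Matrix.GeneralLinearGroup (Fin 3) F, g ∈ M ↔ ∃ a b c d : F,
      (g : Matrix (Fin 3) (Fin 3) F) = !![a, b, 0; c, d, 0; 0, 0, 1] ∧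
      a * c ^ q - a ^ q * c = 0 ∧ b * d ^ q - b ^ q * d = 0 ∧
      b * c ^ q - a ^ q * d = -1 ∧ a * d ^ q - b ^ q * c = 1) :
    (∀ g : M, g ∈ Subgroup.center M ↔ ∃ a : F, a ^ (q + 1) = 1 ∧
      ((g : Matrix.GeneralLinearGroup (Fin 3) F) : Matrix (Fin 3) (Fin 3) F)
        = !![a, 0, 0; 0, a, 0; 0, 0, 1]) ∧
    IsCyclic (Subgroup.center M) ∧
    Nat.card (Subgroup.center M) = q + 1 := by
  have hq_odd : Odd q := hq ▸ (hp.odd_of_ne_two hodd).pow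
  let e := rootsOfUnityEquivCenter hq_odd hM
  exact ⟨mem_center_iff_eq_scalarBlock hq_odd hM, e.isCyclic.1 inferInstance,
    (Nat.card_congr e.toEquiv).symm.trans (natCard_rootsOfUnity_succ_of_card_eq_sq hF)⟩

/-- Let `q` be a power of an odd prime.  The center of the group `𝓜`
equals `{ diag(a,a,1) : a ∈ 𝔽_{q²}, a^(q+1) = 1 }`, which is a cyclic group of
order `q+1`. -/
theorem stmt_2 (p : ℕ) (hp : p.Prime) (hodd : p ≠ 2) (h : ℕ) (hh : 1 ≤ h)
    (q : ℕ) (hq : q = p ^ h)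
    (F : Type) [Field F] [Fintype F] (hF : Fintype.card F = q ^ 2)
    (M : Subgroup (Matrix.GeneralLinearGroup (Fin 3) F))
    (hM : ∀ g : Matrix.GeneralLinearGroup (Fin 3) F, g ∈ M ↔ ∃ a b c d : F,
      (g : Matrix (Fin 3) (Fin 3) F) = !![a, b, 0; c, d, 0; 0, 0, 1] ∧
      a * c ^ q - a ^ q * c = 0 ∧ b * d ^ q - b ^ q * d = 0 ∧
      b * c ^ q - a ^ q * d = -1 ∧ a * d ^ q - b ^ q * c = 1) :
    (∀ g : M, g ∈ Subgroup.center M ↔ ∃ a : F, a ^ (q + 1) = 1 ∧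
      ((g : Matrix.GeneralLinearGroup (Fin 3) F) : Matrix (Fin 3) (Fin 3) F)
        = !![a, 0, 0; 0, a, 0; 0, 0, 1]) ∧
    IsCyclic (Subgroup.center M) ∧
    Nat.card (Subgroup.center M) = q + 1 :=
  stmt_2_general p hp hodd h q hq F hF M hM
end

section
/- Let q be a power of an odd prime, ω ∈ 𝔽_{q²} with ω^{q−1} = −1, and let A = [[a,b],[c,d]] be a matrix with entries in 𝔽_q and determinant 1. If there exists a point (x,y) in the affine plane over the algebraic closure of 𝔽_q with x y^q − y x^q + ω = 0 such that ax + by = x and cx + dy = y, then A is the identity matrix. Consequently, the action of any subgroup of SL(2,𝔽_q) (acting as (x,y) ↦ (ax+by, cx+dy)) on the affine points of the Hermitian curve is semiregular: every orbit has length equal to the group order. -/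
private lemma stmt5_key {K : Type} [Field K] (q : ℕ) (x y s w : K)
    (hs : s ^ q = s) (hy : y = s * x) (hcurve : x * y ^ q - y * x ^ q + w = 0) : w = 0 := by
  subst hy
  rw [mul_pow, hs] at hcurve
  linear_combination hcurve

private lemma stmt5_key' {K : Type} [Field K] (q : ℕ) (x y s w : K)
    (hs : s ^ q = s) (hx : x = s * y) (hcurve : x * y ^ q - y * x ^ q + w = 0) : w = 0 := by
  subst hx
  rw [mul_pow, hs] at hcurve
  linear_combination hcurve

private lemma stmt5_fix (q : ℕ) (F K : Type) [Field F] [Field K] [Algebra F K]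
    (ω : F) (hω0 : ω ≠ 0) (Fq : Subfield F) (hFq : ∀ x : F, x ∈ Fq ↔ x ^ q = x)
    (a b c d : F) (ha : a ∈ Fq) (hb : b ∈ Fq) (hc : c ∈ Fq) (hd : d ∈ Fq)
    (hdet : a * d - b * c = 1) (x y : K)
    (hcurve : x * y ^ q - y * x ^ q + algebraMap F K ω = 0)
    (e1 : algebraMap F K a * x + algebraMap F K b * y = x)
    (e2 : algebraMap F K c * x + algebraMap F K d * y = y) :
    a = 1 ∧ b = 0 ∧ c = 0 ∧ d = 1 := by
  set A := algebraMap F K with hA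
  have inj : Function.Injective A := (algebraMap F K).injective
  have hpow : ∀ u ∈ Fq, (A u) ^ q = A u := fun u hu => by
    rw [← map_pow]; exact congrArg A ((hFq u).mp hu)
  have hωK : A ω ≠ 0 := fun h0 => hω0 (inj (by simpa using h0))
  have hb0 : b = 0 := by
    by_contra hbne
    have hb' : A b ≠ 0 := fun h0 => hbne (inj (by simpa using h0))
    have hmem : b⁻¹ * (1 - a) ∈ Fq := Fq.mul_mem (Fq.inv_mem hb) (Fq.sub_mem Fq.one_mem ha)
    have hs : ((A b)⁻¹ * (1 - A a)) ^ q = (A b)⁻¹ * (1 - A a) := by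
      have := hpow _ hmem
      rwa [map_mul, map_inv₀, map_sub, map_one] at this
    have h1 : A b * y = (1 - A a) * x := by linear_combination e1
    have hy : y = (A b)⁻¹ * (1 - A a) * x := by
      rw [mul_assoc, ← h1, inv_mul_cancel_left₀ hb']
    exact hωK (stmt5_key q x y _ _ hs hy hcurve)
  have hc0 : c = 0 := by
    by_contra hcne
    have hc' : A c ≠ 0 := fun h0 => hcne (inj (by simpa using h0))
    have hmem : c⁻¹ * (1 - d) ∈ Fq := Fq.mul_mem (Fq.inv_mem hc) (Fq.sub_mem Fq.one_mem hd)
    have hs : ((A c)⁻¹ * (1 - A d)) ^ q = (A c)⁻¹ * (1 - A d) := by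
      have := hpow _ hmem
      rwa [map_mul, map_inv₀, map_sub, map_one] at this
    have h1 : A c * x = (1 - A d) * y := by linear_combination e2
    have hx : x = (A c)⁻¹ * (1 - A d) * y := by
      rw [mul_assoc, ← h1, inv_mul_cancel_left₀ hc']
    exact hωK (stmt5_key' q x y _ _ hs hx hcurve)
  subst hb0 hc0
  have had : a * d = 1 := by linear_combination hdet
  have ha1 : a = 1 := by
    by_contra hane
    have ha' : A a - 1 ≠ 0 := fun h0 => hane (inj (by
      rw [map_one]; exact sub_eq_zero.mp h0))
    have hx0 : x = 0 := by
      have : (A a - 1) * x = 0 := by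
        simp only [map_zero, zero_mul, add_zero] at e1
        linear_combination e1
      exact (mul_eq_zero.mp this).resolve_left ha'
    have hd1 : d ≠ 1 := fun h0 => hane (by rw [h0, mul_one] at had; exact had)
    have hd' : A d - 1 ≠ 0 := fun h0 => hd1 (inj (by
      rw [map_one]; exact sub_eq_zero.mp h0))
    have hy0 : y = 0 := by
      have : (A d - 1) * y = 0 := by
        simp only [map_zero, zero_mul, zero_add] at e2
        linear_combination e2
      exact (mul_eq_zero.mp this).resolve_left hd'
    rw [hx0, hy0] at hcurve
    simp at hcurve
    exact hω0 hcurve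
  refine ⟨ha1, rfl, rfl, ?_⟩
  rw [ha1, one_mul] at had
  exact had

private def stmt5_act {F K : Type} [Field F] [Field K] [Algebra F K] {Fq : Subfield F}
    (g : Matrix.SpecialLinearGroup (Fin 2) Fq) (z : K × K) : K × K :=
  (algebraMap F K (((g : Matrix (Fin 2) (Fin 2) Fq) 0 0 : Fq) : F) * z.1
      + algebraMap F K (((g : Matrix (Fin 2) (Fin 2) Fq) 0 1 : Fq) : F) * z.2,
    algebraMap F K (((g : Matrix (Fin 2) (Fin 2) Fq) 1 0 : Fq) : F) * z.1
      + algebraMap F K (((g : Matrix (Fin 2) (Fin 2) Fq) 1 1 : Fq) : F) * z.2)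

private lemma stmt5_act_mul {F K : Type} [Field F] [Field K] [Algebra F K] {Fq : Subfield F}
    (g h : Matrix.SpecialLinearGroup (Fin 2) Fq) (z : K × K) :
    stmt5_act (g * h) z = stmt5_act g (stmt5_act h z) := by
  unfold stmt5_act
  rw [Matrix.SpecialLinearGroup.coe_mul]
  simp only [Matrix.mul_apply, Fin.sum_univ_two, Subfield.coe_add, MulMemClass.coe_mul,
    map_add, map_mul]
  refine Prod.ext ?_ ?_ <;> · dsimp only; ring

private lemma stmt5_act_one {F K : Type} [Field F] [Field K] [Algebra F K] {Fq : Subfield F}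
    (z : K × K) : stmt5_act (1 : Matrix.SpecialLinearGroup (Fin 2) Fq) z = (z : K × K) := by
  unfold stmt5_act
  rw [Matrix.SpecialLinearGroup.coe_one]
  norm_num [Matrix.one_apply]

set_option maxHeartbeats 1000000 in
/-- Let `q` be a power of an odd prime, `ω ∈ 𝔽_{q²}` with `ω^(q-1) = -1`,
and `A = [[a,b],[c,d]]` a matrix with entries in `𝔽_q` (the subfield `{x | x^q = x}` of
`𝔽_{q²}`) and determinant `1`.  If some affine point `(x,y)` of the Hermitian curve
`x y^q - y x^q + ω = 0` (over the algebraic closure) is fixed by `A`, then `A = 1`.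
Consequently the action of any subgroup `G ≤ SL(2,𝔽_q)` on the affine points of the
Hermitian curve is semiregular: every orbit has length `|G|`. -/
theorem stmt_5 (p : ℕ) (hp : p.Prime) (hodd : p ≠ 2) (h : ℕ) (hh : 1 ≤ h)
    (q : ℕ) (hq : q = p ^ h)
    (F : Type) [Field F] [Fintype F] (hF : Fintype.card F = q ^ 2)
    (K : Type) [Field K] [IsAlgClosed K] [Algebra F K]
    (ω : F) (hω : ω ^ (q - 1) = -1)
    (Fq : Subfield F) (hFq : ∀ x : F, x ∈ Fq ↔ x ^ q = x) :
    (∀ a b c d : F, a ∈ Fq → b ∈ Fq → c ∈ Fq → d ∈ Fq → a * d - b * c = 1 →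
      (∃ x y : K, x * y ^ q - y * x ^ q + algebraMap F K ω = 0 ∧
        algebraMap F K a * x + algebraMap F K b * y = x ∧
        algebraMap F K c * x + algebraMap F K d * y = y) →
      a = 1 ∧ b = 0 ∧ c = 0 ∧ d = 1) ∧
    (∀ G : Subgroup (Matrix.SpecialLinearGroup (Fin 2) Fq),
      ∀ pt : K × K, pt.1 * pt.2 ^ q - pt.2 * pt.1 ^ q + algebraMap F K ω = 0 →
        Set.ncard {pt' : K × K | ∃ g ∈ G,
          (algebraMap F K (((g : Matrix (Fin 2) (Fin 2) Fq) 0 0 : Fq) : F) * pt.1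
              + algebraMap F K (((g : Matrix (Fin 2) (Fin 2) Fq) 0 1 : Fq) : F) * pt.2,
            algebraMap F K (((g : Matrix (Fin 2) (Fin 2) Fq) 1 0 : Fq) : F) * pt.1
              + algebraMap F K (((g : Matrix (Fin 2) (Fin 2) Fq) 1 1 : Fq) : F) * pt.2) = pt'}
          = Nat.card G) := by
  have hq1 : 1 < q := by
    rw [hq]; exact Nat.one_lt_pow (by omega) hp.one_lt
  have hω0 : ω ≠ 0 := by
    intro h0
    rw [h0, zero_pow (by omega : q - 1 ≠ 0)] at hω
    exact one_ne_zero (neg_eq_zero.mp hω.symm)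
  have H1 : ∀ a b c d : F, a ∈ Fq → b ∈ Fq → c ∈ Fq → d ∈ Fq → a * d - b * c = 1 →
      (∃ x y : K, x * y ^ q - y * x ^ q + algebraMap F K ω = 0 ∧
        algebraMap F K a * x + algebraMap F K b * y = x ∧
        algebraMap F K c * x + algebraMap F K d * y = y) →
      a = 1 ∧ b = 0 ∧ c = 0 ∧ d = 1 := by
    rintro a b c d ha hb hc hd hdet ⟨x, y, hcurve, e1, e2⟩
    exact stmt5_fix q F K ω hω0 Fq hFq a b c d ha hb hc hd hdet x y hcurve e1 e2
  refine ⟨H1, ?_⟩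
  intro G pt hpt
  have hinj : Function.Injective
      (fun g : Matrix.SpecialLinearGroup (Fin 2) Fq => stmt5_act g pt) := by
    intro g g' hgg
    simp only at hgg
    have hfix : stmt5_act (g'⁻¹ * g) pt = pt := by
      rw [stmt5_act_mul, hgg, ← stmt5_act_mul, inv_mul_cancel, stmt5_act_one]
    set m := g'⁻¹ * g with hm
    have hdet : (((m : Matrix (Fin 2) (Fin 2) Fq) 0 0 : Fq) : F)
          * (((m : Matrix (Fin 2) (Fin 2) Fq) 1 1 : Fq) : F)
        - (((m : Matrix (Fin 2) (Fin 2) Fq) 0 1 : Fq) : F)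
          * (((m : Matrix (Fin 2) (Fin 2) Fq) 1 0 : Fq) : F) = 1 := by
      have h2 := m.2
      rw [Matrix.det_fin_two] at h2
      have h3 := congrArg (Subfield.subtype Fq) h2
      simpa using h3
    obtain ⟨e1, e2, e3, e4⟩ := H1 _ _ _ _ (SetLike.coe_mem _) (SetLike.coe_mem _)
      (SetLike.coe_mem _) (SetLike.coe_mem _) hdet
      ⟨pt.1, pt.2, hpt, congrArg Prod.fst hfix, congrArg Prod.snd hfix⟩
    have hm1 : m = 1 := by
      apply Matrix.SpecialLinearGroup.ext
      intro i j
      fin_cases i <;> fin_cases j <;>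
        · rw [show ((1 : Matrix.SpecialLinearGroup (Fin 2) Fq) : Matrix (Fin 2) (Fin 2) Fq)
              = (1 : Matrix (Fin 2) (Fin 2) Fq) from Matrix.SpecialLinearGroup.coe_one]
          first
          | exact Subtype.ext (by simpa [Matrix.one_apply] using e1)
          | exact Subtype.ext (by simpa [Matrix.one_apply] using e2)
          | exact Subtype.ext (by simpa [Matrix.one_apply] using e3)
          | exact Subtype.ext (by simpa [Matrix.one_apply] using e4)
    have : g' = g := inv_mul_eq_one.mp hm1
    exact this.symm
  have hset : {pt' : K × K | ∃ g ∈ G,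
          (algebraMap F K (((g : Matrix (Fin 2) (Fin 2) Fq) 0 0 : Fq) : F) * pt.1
              + algebraMap F K (((g : Matrix (Fin 2) (Fin 2) Fq) 0 1 : Fq) : F) * pt.2,
            algebraMap F K (((g : Matrix (Fin 2) (Fin 2) Fq) 1 0 : Fq) : F) * pt.1
              + algebraMap F K (((g : Matrix (Fin 2) (Fin 2) Fq) 1 1 : Fq) : F) * pt.2) = pt'}
      = (fun g : Matrix.SpecialLinearGroup (Fin 2) Fq => stmt5_act g pt) '' (G : Set _) := by
    ext pt'
    simp only [Set.mem_setOf_eq, Set.mem_image, SetLike.mem_coe, stmt5_act]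
  rw [hset, Set.ncard_image_of_injOn hinj.injOn, ← Nat.card_coe_set_eq]
  rfl
end

section
/- Let p be a prime, q = p^h, K the algebraic closure of 𝔽_p, λ ∈ K with λ^h = −1, and d a positive divisor of q+1. Then the polynomial Y^{(q+1)/d} − Σ_{i=1}^{h} λ^{i−1} X^{q/p^i} is irreducible in K[X,Y]; that is, the plane curve y^{(q+1)/d} = Σ_{i=1}^{h} λ^{i−1} x^{q/p^i} is absolutely irreducible. -/
/-!
With `n = (q + 1) / d` and `f = ∑ λ^(i-1) X^(p^(h-i))`, the polynomial is `Y ^ n - f(X)`, and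
`deg f = p^(h-1)` is prime to `n` because `p ∤ q + 1`. Such a polynomial is irreducible over
any field. By Gauss's lemma it suffices to work over `F = K(X)`. If `g` is an irreducible factor
of `Y ^ n - f` of degree `k`, the norm of a root of `g` is an `n`-th root of `f ^ k` in `F`; since
`K[X]` is integrally closed it is a polynomial `c` with `c ^ n = f ^ k`, so
`n ∣ k · deg f`, hence `n ∣ k` and `g` has full degree `n`.
-/

open Polynomial

theorem exists_pow_eq_pow_natDegree_of_irreducible_dvd {F : Type*} [Field F] {n : ℕ} {a : F}
    {g : F[X]} (hg : Irreducible g) (hgd : g ∣ X ^ n - C a) :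
    ∃ b : F, b ^ n = a ^ g.natDegree := by
  -- `N(r) ^ n = N(r ^ n) = N(a) = a ^ deg g` for a root `r` of `g`
  refine ⟨Algebra.norm F (AdjoinRoot.root g), ?_⟩
  have hroot := eval₂_eq_zero_of_dvd_of_eval₂_eq_zero _ _ hgd (AdjoinRoot.eval₂_root g)
  rw [eval₂_sub, eval₂_pow, eval₂_C, eval₂_X, sub_eq_zero] at hroot
  rw [← map_pow, hroot, ← AdjoinRoot.algebraMap_eq, Algebra.norm_algebraMap,
    (AdjoinRoot.powerBasis hg.ne_zero).finrank, AdjoinRoot.powerBasis_dim hg.ne_zero]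

theorem X_pow_sub_C_irreducible_of_forall_pow_ne_pow {F : Type*} [Field F] {n : ℕ} (hn : n ≠ 0)
    {a : F} (ha : ∀ k, 0 < k → k < n → ∀ b : F, b ^ n ≠ a ^ k) :
    Irreducible (X ^ n - C a) := by
  have hne : X ^ n - C a ≠ 0 := X_pow_sub_C_ne_zero (Nat.pos_of_ne_zero hn) a
  have hnu : ¬IsUnit (X ^ n - C a) := by
    rw [isUnit_iff_degree_eq_zero, degree_X_pow_sub_C (Nat.pos_of_ne_zero hn)]
    exact_mod_cast hn
  obtain ⟨g, hg, hgd⟩ := WfDvdMonoid.exists_irreducible_factor hnu hne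
  have hle : g.natDegree ≤ n := (natDegree_le_of_dvd hgd hne).trans_eq natDegree_X_pow_sub_C
  rcases hle.lt_or_eq with hlt | heq
  · obtain ⟨b, hb⟩ := exists_pow_eq_pow_natDegree_of_irreducible_dvd hg hgd
    exact absurd hb (ha _ hg.natDegree_pos hlt b)
  · exact (associated_of_dvd_of_natDegree_le hgd hne
      (natDegree_X_pow_sub_C.trans heq.symm).le).irreducible hg

theorem Polynomial.dvd_of_pow_eq_pow_of_coprime_natDegree {R : Type*} [Semiring R]
    [NoZeroDivisors R] {n k : ℕ} {c f : R[X]} (hcop : n.Coprime f.natDegree)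
    (h : c ^ n = f ^ k) : n ∣ k :=
  hcop.dvd_of_dvd_mul_right ⟨c.natDegree, by rw [← natDegree_pow, ← h, natDegree_pow]⟩

theorem Polynomial.irreducible_X_pow_sub_C_of_coprime_natDegree {K : Type*} [Field K] {n : ℕ}
    (hn : n ≠ 0) {f : K[X]} (hcop : n.Coprime f.natDegree) :
    Irreducible (X ^ n - C f : K[X][X]) := by
  let F := FractionRing K[X]
  rw [(monic_X_pow_sub_C f hn).irreducible_iff_irreducible_map_fraction_map (K := F),
    Polynomial.map_sub, Polynomial.map_pow, map_X, map_C]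
  refine X_pow_sub_C_irreducible_of_forall_pow_ne_pow hn fun k hk hkn b hb => ?_
  obtain ⟨c, rfl⟩ : ∃ c : K[X], algebraMap K[X] F c = b :=
    IsIntegrallyClosed.exists_algebraMap_eq_of_isIntegral_pow (Nat.pos_of_ne_zero hn)
      (hb ▸ (isIntegral_algebraMap (x := f)).pow k)
  rw [← map_pow, ← map_pow] at hb
  have hnk := dvd_of_pow_eq_pow_of_coprime_natDegree hcop
    (IsFractionRing.injective K[X] F hb)
  exact absurd (Nat.le_of_dvd hk hnk) (not_le.mpr hkn)

theorem Polynomial.natDegree_sum_C_mul_X_pow_pow {R : Type*} [Semiring R] [Nontrivial R]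
    {p h : ℕ} (hp : 1 < p) (hh : 1 ≤ h) (lam : R) :
    (∑ i ∈ Finset.Icc 1 h, C (lam ^ (i - 1)) * X ^ p ^ (h - i)).natDegree = p ^ (h - 1) := by
  apply natDegree_eq_of_le_of_coeff_ne_zero
  · refine natDegree_sum_le_of_forall_le _ _ fun i hi => ?_
    refine (natDegree_C_mul_X_pow_le _ _).trans (Nat.pow_le_pow_right (by omega) ?_)
    have := (Finset.mem_Icc.mp hi).1
    omega
  · rw [finsetSum_coeff, Finset.sum_eq_single_of_mem 1 (Finset.mem_Icc.mpr ⟨le_rfl, hh⟩)]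
    · simp
    · intro i hi hi1
      have := Finset.mem_Icc.mp hi
      rw [coeff_C_mul_X_pow, if_neg ((Nat.pow_right_injective hp).ne (by omega))]

theorem stmt_9_general (p : ℕ) (hp : p.Prime) (h : ℕ) (hh : 1 ≤ h) (q : ℕ) (hq : q = p ^ h)
    (K : Type) [Field K]
    (lam : K)
    (d : ℕ) (hd : d ∣ q + 1) :
    Irreducible ((MvPolynomial.X 1 : MvPolynomial (Fin 2) K) ^ ((q + 1) / d)
      - ∑ i ∈ Finset.Icc 1 h,
          MvPolynomial.C (lam ^ (i - 1)) * (MvPolynomial.X 0 : MvPolynomial (Fin 2) K) ^ (p ^ (h - i))) := by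
  have hn : (q + 1) / d ≠ 0 := fun h0 => by
    simpa [h0] using Nat.div_mul_cancel hd
  have hp_not_dvd : ¬p ∣ (q + 1) / d := fun hdvd => hp.not_dvd_one <|
    (Nat.dvd_add_right (hq ▸ dvd_pow_self p (by omega))).mp (hdvd.trans (Nat.div_dvd_of_dvd hd))
  have hcop : ((q + 1) / d).Coprime (p ^ (h - 1)) :=
    (hp.coprime_iff_not_dvd.mpr hp_not_dvd).symm.pow_right _
  have key := irreducible_X_pow_sub_C_of_coprime_natDegree hn
    (f := ∑ i ∈ Finset.Icc 1 h, C (lam ^ (i - 1)) * X ^ p ^ (h - i))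
    (by rwa [natDegree_sum_C_mul_X_pow_pow hp.one_lt hh])
  convert key.map (Bivariate.equivMvPolynomial K) using 1
  simp [map_sum]

/-- Let `p` be a prime, `q = p^h`, `K` the algebraic closure of `𝔽_p`
(formalized: an algebraically closed field of characteristic `p`),
`λ ∈ K` with `λ^h = -1`, and `d` a positive divisor of `q+1`.  Then the polynomial
`Y^((q+1)/d) - ∑_{i=1}^h λ^(i-1) X^(q/p^i)` is irreducible in `K[X,Y]`;
that is, the plane curve `y^((q+1)/d) = ∑ λ^(i-1) x^(q/p^i)` is absolutely irreducible.
(Here `q/p^i = p^(h-i)`.) -/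
theorem stmt_9 (p : ℕ) (hp : p.Prime) (h : ℕ) (hh : 1 ≤ h) (q : ℕ) (hq : q = p ^ h)
    (K : Type) [Field K] [IsAlgClosed K] [CharP K p]
    (lam : K) (hlam : lam ^ h = -1)
    (d : ℕ) (hd0 : 0 < d) (hd : d ∣ q + 1) :
    Irreducible ((MvPolynomial.X 1 : MvPolynomial (Fin 2) K) ^ ((q + 1) / d)
      - ∑ i ∈ Finset.Icc 1 h,
          MvPolynomial.C (lam ^ (i - 1)) * (MvPolynomial.X 0 : MvPolynomial (Fin 2) K) ^ (p ^ (h - i))) :=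
  stmt_9_general p hp h hh q hq K lam d hd
end
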